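/- arXiv:math/0701820 — 4 statements merged into one kernel-verified Lean document; each statement's English description precedes it below -/
import Mathlib

section
/- Let F : ℂ^m → ℂ be entire with |F(z)| ≤ C·e^{b‖z‖} for all z ∈ ℂ^m and suppose F is bounded on ℝ^m. Then |F(x+iy)| ≤ (sup_{x'∈ℝ^m}|F(x')|)·e^{b‖y‖} for all x, y ∈ ℝ^m. -/
open Complex

/-- One-variable Phragmén–Lindelöf: entire of exponential type τ, bounded by M on ℝ,
then |g(I)| ≤ M e^τ. -/
lemma one_dim_PL {g : ℂ → ℂ} (hg : Differentiable ℂ g) {A τ M : ℝ}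
    (hτ : 0 ≤ τ)
    (hgrow : ∀ w : ℂ, ‖g w‖ ≤ A * Real.exp (τ * ‖w‖))
    (hreal : ∀ t : ℝ, ‖g t‖ ≤ M) :
    ‖g I‖ ≤ M * Real.exp τ := by
  set h : ℂ → ℂ := fun w => g (w * I) * Complex.exp (-(τ : ℂ) * w) with hh
  have hA : 0 ≤ A := by
    have := (norm_nonneg (g 0)).trans (hgrow 0)
    nlinarith [Real.exp_pos (τ * ‖(0 : ℂ)‖)]
  have hhd : Differentiable ℂ h :=
    (hg.comp (differentiable_id.mul_const I)).mul
      ((differentiable_const _ |>.mul differentiable_id).cexp)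
  have hnorm : ∀ w : ℂ, ‖h w‖ = ‖g (w * I)‖ * Real.exp (-τ * w.re) := by
    intro w
    simp [hh, map_mul, Complex.norm_exp]
  have key : ∀ z : ℂ, 0 ≤ z.re → ‖h z‖ ≤ M := by
    intro z hz
    refine PhragmenLindelof.right_half_plane_of_bounded_on_real
      (hhd.diffContOnCl) ⟨1, one_lt_two, 2 * τ, ?_⟩ ?_ ?_ hz
    · refine Asymptotics.IsBigO.of_bound A ?_
      filter_upwards with w
      rw [Real.norm_eq_abs, Real.abs_exp, hnorm]
      have h1 : ‖g (w * I)‖ ≤ A * Real.exp (τ * ‖w‖) := by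
        simpa [map_mul] using hgrow (w * I)
      have h2 : Real.exp (-τ * w.re) ≤ Real.exp (τ * ‖w‖) := by
        apply Real.exp_le_exp.2
        have := Complex.abs_re_le_norm w
        nlinarith [neg_le_abs w.re]
      calc ‖g (w * I)‖ * Real.exp (-τ * w.re)
          ≤ (A * Real.exp (τ * ‖w‖)) * Real.exp (τ * ‖w‖) := by
            apply mul_le_mul h1 h2 (Real.exp_pos _).le
            positivity
        _ = A * Real.exp (2 * τ * ‖w‖ ^ (1 : ℝ)) := by
            rw [Real.rpow_one, mul_assoc, ← Real.exp_add]; ring_nf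
    · refine ⟨A, ?_⟩
      rw [Filter.eventually_map]
      filter_upwards [Filter.eventually_ge_atTop (0 : ℝ)] with t ht
      rw [hnorm]
      have h1 : ‖g ((t : ℂ) * I)‖ ≤ A * Real.exp (τ * t) := by
        have := hgrow ((t : ℂ) * I)
        simpa [map_mul, Complex.norm_real, Real.norm_eq_abs, _root_.abs_of_nonneg ht] using this
      have : Real.exp (-τ * (t : ℂ).re) = (Real.exp (τ * t))⁻¹ := by
        rw [← Real.exp_neg]; simp
      rw [this]
      calc ‖g ((t : ℂ) * I)‖ * (Real.exp (τ * t))⁻¹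
          ≤ (A * Real.exp (τ * t)) * (Real.exp (τ * t))⁻¹ := by
            apply mul_le_mul_of_nonneg_right h1; positivity
        _ = A := by field_simp
    · intro s
      rw [hnorm]
      have h1 : ((s : ℂ) * I * I) = ((-s : ℝ) : ℂ) := by
        push_cast; rw [mul_assoc, Complex.I_mul_I]; ring
      have h2 : ((s : ℂ) * I).re = 0 := by simp
      rw [h1, h2, mul_zero, Real.exp_zero, mul_one]
      exact hreal (-s)
  have h1 := key 1 (by norm_num)
  rw [hnorm] at h1
  simp only [one_mul, Complex.one_re, mul_one] at h1
  have : ‖g I‖ * Real.exp (-τ) ≤ M := h1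
  calc ‖g I‖ = ‖g I‖ * Real.exp (-τ) * Real.exp τ := by
        rw [mul_assoc, ← Real.exp_add]; simp
    _ ≤ M * Real.exp τ := by
        apply mul_le_mul_of_nonneg_right this (Real.exp_pos _).le

/-- If F : ℂ^m → ℂ is entire with |F(z)| ≤ C·e^{b‖z‖} and F is bounded on ℝ^m, then
|F(x+iy)| ≤ (sup_{x'∈ℝ^m}|F(x')|)·e^{b‖y‖} for all x, y ∈ ℝ^m. -/
theorem entire_exp_type_bounded_on_reals_tube_bound
    {m : ℕ} (F : EuclideanSpace ℂ (Fin m) → ℂ) (hF : Differentiable ℂ F)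
    (C b : ℝ) (hC : 0 < C) (hb : 0 < b)
    (hgrowth : ∀ z : EuclideanSpace ℂ (Fin m), ‖F z‖ ≤ C * Real.exp (b * ‖z‖))
    (hbddR : BddAbove (Set.range fun x : EuclideanSpace ℝ (Fin m) =>
      ‖F (WithLp.toLp 2 (fun j => (x j : ℂ)))‖)) :
    ∀ x y : EuclideanSpace ℝ (Fin m),
      ‖F (WithLp.toLp 2 (fun j => (x j : ℂ) + Complex.I * y j))‖ ≤
        (⨆ x' : EuclideanSpace ℝ (Fin m), ‖F (WithLp.toLp 2 (fun j => (x' j : ℂ)))‖) *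
          Real.exp (b * ‖y‖) := by
  intro x y
  set M : ℝ := ⨆ x' : EuclideanSpace ℝ (Fin m), ‖F (WithLp.toLp 2 (fun j => (x' j : ℂ)))‖ with hM
  -- complexifications
  set xC : EuclideanSpace ℂ (Fin m) := WithLp.toLp 2 (fun j => (x j : ℂ)) with hxC
  set yC : EuclideanSpace ℂ (Fin m) := WithLp.toLp 2 (fun j => (y j : ℂ)) with hyC
  have hx' : ‖xC‖ = ‖x‖ := by
    rw [EuclideanSpace.norm_eq, EuclideanSpace.norm_eq]
    congr 1
    refine Finset.sum_congr rfl fun i _ => ?_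
    show ‖((x i : ℂ))‖ ^ 2 = ‖x i‖ ^ 2
    rw [Complex.norm_real]
  have hy' : ‖yC‖ = ‖y‖ := by
    rw [EuclideanSpace.norm_eq, EuclideanSpace.norm_eq]
    congr 1
    refine Finset.sum_congr rfl fun i _ => ?_
    show ‖((y i : ℂ))‖ ^ 2 = ‖y i‖ ^ 2
    rw [Complex.norm_real]
  set g : ℂ → ℂ := fun w => F (xC + w • yC) with hg
  have hgd : Differentiable ℂ g :=
    hF.comp ((differentiable_const xC).add (differentiable_id.smul_const yC))
  have hτ : (0 : ℝ) ≤ b * ‖y‖ := by positivity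
  have hgrow : ∀ w : ℂ, ‖g w‖ ≤
      (C * Real.exp (b * ‖x‖)) * Real.exp ((b * ‖y‖) * ‖w‖) := by
    intro w
    have hb1 : ‖xC + w • yC‖ ≤ ‖x‖ + ‖w‖ * ‖y‖ := by
      calc ‖xC + w • yC‖ ≤ ‖xC‖ + ‖w • yC‖ := norm_add_le _ _
        _ = ‖x‖ + ‖w‖ * ‖y‖ := by
            rw [norm_smul, hx', hy']
    calc ‖g w‖ ≤ C * Real.exp (b * ‖xC + w • yC‖) := hgrowth _
      _ ≤ C * Real.exp (b * (‖x‖ + ‖w‖ * ‖y‖)) := by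
          apply mul_le_mul_of_nonneg_left _ hC.le
          exact Real.exp_le_exp.2 (mul_le_mul_of_nonneg_left hb1 hb.le)
      _ = (C * Real.exp (b * ‖x‖)) * Real.exp ((b * ‖y‖) * ‖w‖) := by
          rw [mul_assoc, ← Real.exp_add]; ring_nf
  have hreal : ∀ t : ℝ, ‖g t‖ ≤ M := by
    intro t
    have hval : g t = F (WithLp.toLp 2 (fun j => ((x + t • y) j : ℂ))) := by
      show F (xC + (t : ℂ) • yC) = _
      congr 1
      ext j
      show (x j : ℂ) + (t : ℂ) * (y j : ℂ) = (((x + t • y) j : ℝ) : ℂ)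
      have : (x + t • y) j = x j + t * y j := rfl
      rw [this]; push_cast; ring
    rw [hval]
    exact le_ciSup hbddR (x + t • y)
  have hres := one_dim_PL hgd hτ hgrow hreal
  have hvalI : g I = F (WithLp.toLp 2 (fun j => (x j : ℂ) + Complex.I * y j)) := by
    show F (xC + I • yC) = _
    congr 1
  rw [hvalI] at hres
  exact hres
end

section
/- For b ≥ 0 and ε > 0, the intersection over all unit vectors μ ∈ ℝ^m of the sets Γ̂_{−μ} + (b+ε)μ is contained in the closed ball {λ ∈ ℝ^m : ‖λ‖ ≤ b+ε}, where Γ̂_{−μ} is the dual cone of Γ_{−μ} = {y : ⟨y,−μ⟩ ≥ (1 − ε/(b+ε))‖y‖}. -/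
/-- For b ≥ 0 and ε > 0, the intersection over all unit vectors μ of the translated dual cones
Γ̂_{−μ} + (b+ε)μ, where Γ_{−μ} = {y : ⟨y,−μ⟩ ≥ (1 − ε/(b+ε))‖y‖}, is contained in the closed
ball of radius b+ε. -/
theorem inter_translated_dual_cones_subset_ball
    {m : ℕ} (b ε : ℝ) (hb : 0 ≤ b) (hε : 0 < ε) :
    (⋂ μ ∈ {μ : EuclideanSpace ℝ (Fin m) | ‖μ‖ = 1},
        (fun t => t + (b + ε) • μ) ''
          {t : EuclideanSpace ℝ (Fin m) |
            ∀ y : EuclideanSpace ℝ (Fin m),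
              (inner ℝ y (-μ) : ℝ) ≥ (1 - ε / (b + ε)) * ‖y‖ → 0 ≤ (inner ℝ t y : ℝ)}) ⊆
      Metric.closedBall (0 : EuclideanSpace ℝ (Fin m)) (b + ε) := by
  intro lam hlam
  simp only [Set.mem_iInter, Set.mem_setOf_eq] at hlam
  rw [Metric.mem_closedBall, dist_zero_right]
  by_cases h0 : lam = 0
  · simp [h0]; positivity
  · have hnorm : (0 : ℝ) < ‖lam‖ := norm_pos_iff.mpr h0
    set μ : EuclideanSpace ℝ (Fin m) := ‖lam‖⁻¹ • lam with hμdef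
    have hμ : ‖μ‖ = 1 := by
      rw [hμdef, norm_smul, norm_inv, norm_norm, inv_mul_cancel₀ hnorm.ne']
    obtain ⟨t, ht, hteq⟩ := hlam μ hμ
    have hbε : (0 : ℝ) < b + ε := by linarith
    have hy : (inner ℝ (-μ) (-μ) : ℝ) ≥ (1 - ε / (b + ε)) * ‖(-μ : EuclideanSpace ℝ (Fin m))‖ := by
      rw [inner_neg_neg, real_inner_self_eq_norm_sq, hμ, norm_neg, hμ]
      have : 0 < ε / (b + ε) := div_pos hε hbε
      nlinarith
    have hkey : 0 ≤ (inner ℝ t (-μ) : ℝ) := ht _ hy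
    have hteq' : t = (‖lam‖ - (b + ε)) • μ := by
      have : t = lam - (b + ε) • μ := by
        simp only at hteq
        rw [← hteq]; abel
      rw [this, hμdef, smul_smul, sub_smul, smul_smul]
      field_simp
      rw [smul_smul]
      ring_nf
      rw [one_smul]
    rw [hteq', inner_neg_right, inner_smul_left, real_inner_self_eq_norm_sq, hμ] at hkey
    simp only [RCLike.star_def, starRingEnd_apply, star_trivial] at hkey
    nlinarith
end

section
/- Let F : ℂ → ℂ be holomorphic and bounded on the closed upper half-plane and λ < 0. Then lim_{N→∞} (1/(2N)) ∫_{−N}^{N} F(ξ) e^{−iλξ} dξ = 0. -/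
open Complex Filter MeasureTheory intervalIntegral

lemma side_exp_bound (B' lam N : ℝ) (hB' : 0 ≤ B') (hlam : lam < 0) (hN : 0 ≤ N) :
    |∫ y in (0:ℝ)..N, B' * Real.exp (lam * y)| ≤ B' * (-lam⁻¹) := by
  have h : (∫ y in (0:ℝ)..N, B' * Real.exp (lam * y))
      = B' * (lam⁻¹ * (Real.exp (lam * N) - 1)) := by
    rw [intervalIntegral.integral_const_mul,
      intervalIntegral.integral_comp_mul_left Real.exp hlam.ne, mul_zero,
      integral_exp, Real.exp_zero, smul_eq_mul]
  rw [h, abs_le]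
  have h1 := Real.exp_pos (lam * N)
  have h2 : lam⁻¹ < 0 := inv_lt_zero.mpr hlam
  have h3 : Real.exp (lam * N) ≤ 1 := Real.exp_le_one_iff.mpr (by nlinarith)
  have hb : 0 ≤ lam⁻¹ * (Real.exp (lam * N) - 1) := by nlinarith
  have ha : lam⁻¹ * (Real.exp (lam * N) - 1) ≤ -lam⁻¹ := by nlinarith
  constructor
  · nlinarith [mul_nonneg hB' hb, mul_nonpos_of_nonneg_of_nonpos hB' h2.le]
  · exact mul_le_mul_of_nonneg_left ha hB'

/-- If F is holomorphic on a neighborhood of the closed upper half-plane and bounded there,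
and λ < 0, then (1/(2N)) ∫_{−N}^{N} F(ξ) e^{−iλξ} dξ → 0 as N → ∞. -/
theorem mean_of_bounded_holomorphic_neg_exponent_tendsto_zero
    (F : ℂ → ℂ) (U : Set ℂ) (hU : IsOpen U) (hsub : {w : ℂ | 0 ≤ w.im} ⊆ U)
    (hF : DifferentiableOn ℂ F U)
    (hbdd : ∃ B : ℝ, ∀ w : ℂ, 0 ≤ w.im → ‖F w‖ ≤ B)
    (lam : ℝ) (hlam : lam < 0) :
    Tendsto (fun N : ℝ =>
        (2 * N)⁻¹ • ∫ ξ in (-N)..N, F ξ * Complex.exp (-Complex.I * lam * ξ))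
      atTop (nhds 0) := by
  obtain ⟨B, hB⟩ := hbdd
  set B' := max B 0 with hB'def
  have hB'0 : 0 ≤ B' := le_max_right _ _
  set f : ℂ → ℂ := fun w => F w * Complex.exp (-Complex.I * lam * w) with hfdef
  -- pointwise norm bound on the upper half-plane
  have hnorm : ∀ w : ℂ, 0 ≤ w.im → ‖f w‖ ≤ B' * Real.exp (lam * w.im) := by
    intro w hw
    have h1 : ‖Complex.exp (-Complex.I * lam * w)‖ = Real.exp (lam * w.im) := by
      rw [Complex.norm_exp]
      congr 1
      simp [Complex.mul_re, Complex.mul_im]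
    have h2 : ‖F w‖ ≤ B' := le_trans (hB w hw) (le_max_left _ _)
    calc ‖f w‖ = ‖F w‖ * ‖Complex.exp (-Complex.I * lam * w)‖ := norm_mul _ _
      _ ≤ B' * Real.exp (lam * w.im) := by
          rw [h1]; exact mul_le_mul_of_nonneg_right h2 (Real.exp_pos _).le
  have hfdiff : DifferentiableOn ℂ f U :=
    hF.mul (((differentiable_const (-Complex.I * (lam:ℂ))).mul
      differentiable_id).cexp.differentiableOn)
  -- main estimate for N ≥ 1
  have key : ∀ N : ℝ, 1 ≤ N →
      ‖∫ ξ in (-N)..N, f ξ‖ ≤ 2 * N * (B' * Real.exp (lam * N)) + 2 * (B' * (-lam⁻¹)) := by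
    intro N hN
    have hN0 : (0:ℝ) ≤ N := le_trans zero_le_one hN
    -- rectangle contour
    have hsubset : ((Set.uIcc (-N : ℝ) N) ×ℂ (Set.uIcc (0:ℝ) N)) ⊆ U := by
      intro w hw
      apply hsub
      rw [Complex.mem_reProdIm] at hw
      have := hw.2
      rw [Set.uIcc_of_le hN0] at this
      exact this.1
    have hrect := Complex.integral_boundary_rect_eq_zero_of_differentiableOn f
      (⟨-N, 0⟩ : ℂ) (⟨N, N⟩ : ℂ) (by
        simpa using (hfdiff.mono hsubset))
    simp only [Complex.ofReal_zero, zero_mul, add_zero] at hrect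
    have heq : (∫ ξ in (-N)..N, f ξ) =
        (∫ x : ℝ in (-N)..N, f (x + N * Complex.I))
          - Complex.I • (∫ y : ℝ in (0:ℝ)..N, f (N + y * Complex.I))
          + Complex.I • (∫ y : ℝ in (0:ℝ)..N, f (-N + y * Complex.I)) := by
      have : (∫ x : ℝ in (-N)..N, f x) = ∫ x : ℝ in (-N)..N, f (x + (0:ℝ) * Complex.I) := by
        simp
      rw [this]
      simp only [Complex.ofReal_neg, Complex.ofReal_zero, zero_mul, add_zero] at hrect ⊢
      linear_combination hrect
    rw [heq]
    have htop : ‖∫ x : ℝ in (-N)..N, f (x + N * Complex.I)‖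
        ≤ B' * Real.exp (lam * N) * |N - (-N)| := by
      apply intervalIntegral.norm_integral_le_of_norm_le_const
      intro x _
      have him : ((x : ℂ) + N * Complex.I).im = N := by simp
      have := hnorm ((x : ℂ) + N * Complex.I) (by rw [him]; exact hN0)
      rwa [him] at this
    have hside : ∀ c : ℝ, ‖∫ y : ℝ in (0:ℝ)..N, f (c + y * Complex.I)‖ ≤ B' * (-lam⁻¹) := by
      intro c
      have h1 : ‖∫ y : ℝ in (0:ℝ)..N, f (c + y * Complex.I)‖
          ≤ |∫ y in (0:ℝ)..N, B' * Real.exp (lam * y)| := by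
        apply intervalIntegral.norm_integral_le_abs_of_norm_le
        · rw [MeasureTheory.ae_restrict_iff' measurableSet_uIoc]
          apply Filter.Eventually.of_forall
          intro y hy
          have hy0 : 0 ≤ y := le_of_lt (by
            rcases Set.mem_uIoc.mp hy with h | h
            · exact h.1
            · linarith [h.1, h.2, hN0])
          have him : ((c : ℂ) + y * Complex.I).im = y := by simp
          have := hnorm ((c : ℂ) + y * Complex.I) (by rw [him]; exact hy0)
          rwa [him] at this
        · exact (Continuous.intervalIntegrable (by continuity) _ _)
      exact h1.trans (side_exp_bound B' lam N hB'0 hlam hN0)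
    have habs : |N - (-N)| = 2 * N := by rw [_root_.abs_of_nonneg (by linarith : (0:ℝ) ≤ N - -N)]; ring
    calc ‖_ - _ + _‖ ≤ ‖(∫ x : ℝ in (-N)..N, f (x + N * Complex.I))
            - Complex.I • (∫ y : ℝ in (0:ℝ)..N, f (N + y * Complex.I))‖
          + ‖Complex.I • (∫ y : ℝ in (0:ℝ)..N, f (-N + y * Complex.I))‖ := norm_add_le _ _
      _ ≤ ‖∫ x : ℝ in (-N)..N, f (x + N * Complex.I)‖
          + ‖Complex.I • (∫ y : ℝ in (0:ℝ)..N, f (N + y * Complex.I))‖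
          + ‖Complex.I • (∫ y : ℝ in (0:ℝ)..N, f (-N + y * Complex.I))‖ := by
            exact add_le_add (norm_sub_le _ _) le_rfl
      _ ≤ 2 * N * (B' * Real.exp (lam * N)) + 2 * (B' * (-lam⁻¹)) := by
          rw [norm_smul, norm_smul]
          simp only [Complex.norm_I, one_mul]
          have h1 := hside N
          have h2 := hside (-N)
          rw [Complex.ofReal_neg] at h2
          rw [habs] at htop
          linarith
  -- the squeezing bound
  apply squeeze_zero_norm' (a := fun N : ℝ =>
      B' * Real.exp (lam * N) + N⁻¹ * (B' * (-lam⁻¹)))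
  · filter_upwards [eventually_ge_atTop (1:ℝ)] with N hN
    have hN0 : (0:ℝ) < N := lt_of_lt_of_le zero_lt_one hN
    have h2N : (0:ℝ) < 2 * N := by linarith
    rw [norm_smul, norm_inv, Real.norm_eq_abs, _root_.abs_of_pos h2N]
    have hk := key N hN
    calc (2 * N)⁻¹ * ‖∫ ξ in (-N)..N, f ξ‖
        ≤ (2 * N)⁻¹ * (2 * N * (B' * Real.exp (lam * N)) + 2 * (B' * (-lam⁻¹))) := by
          exact mul_le_mul_of_nonneg_left hk (by positivity)
      _ = B' * Real.exp (lam * N) + N⁻¹ * (B' * (-lam⁻¹)) := by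
          have e1 : (2*N)⁻¹ * (2*N*(B'*Real.exp (lam*N))) = B'*Real.exp (lam*N) :=
            inv_mul_cancel_left₀ h2N.ne' _
          have e2 : (2*N)⁻¹ * (2*(B'*(-lam⁻¹))) = N⁻¹*(B'*(-lam⁻¹)) := by
            rw [mul_inv]; ring
          rw [mul_add, e1, e2]
  · have h1 : Tendsto (fun N : ℝ => B' * Real.exp (lam * N)) atTop (nhds 0) := by
      rw [show (0:ℝ) = B' * 0 by ring]
      apply Tendsto.const_mul
      apply Real.tendsto_exp_atBot.comp
      have : Tendsto (fun N : ℝ => -((-lam) * N)) atTop atBot := by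
        apply tendsto_neg_atTop_atBot.comp
        exact Tendsto.const_mul_atTop (by linarith) tendsto_id
      simpa using this
    have h2 : Tendsto (fun N : ℝ => N⁻¹ * (B' * (-lam⁻¹))) atTop (nhds 0) := by
      rw [show (0:ℝ) = 0 * (B' * (-lam⁻¹)) by ring]
      exact tendsto_inv_atTop_zero.mul_const _
    simpa using h1.add h2
end

section
/- Let f : ℝ → ℂ be a Bohr almost periodic function that extends continuously to the closed upper half-plane and holomorphically to the open upper half-plane, with the extension bounded there. Then every Fourier exponent λ of f (i.e., every λ with mean value a(λ) = lim_{N→∞} (2N)^{-1}∫_{−N}^{N} f(x)e^{−iλx}dx ≠ 0) satisfies λ ≥ 0. -/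
open Complex Filter MeasureTheory intervalIntegral

/-- A function f : ℝ → ℂ is Bohr almost periodic: it is continuous and for every ε > 0 the set
of ε-almost periods is relatively dense. -/
def BohrAlmostPeriodic (f : ℝ → ℂ) : Prop :=
  Continuous f ∧
    ∀ ε : ℝ, 0 < ε → ∃ l : ℝ, 0 < l ∧ ∀ a : ℝ, ∃ τ ∈ Set.Icc a (a + l),
      ∀ x : ℝ, ‖f (x + τ) - f x‖ < ε

/-- If a Bohr almost periodic function f on ℝ extends continuously to the closed upper
half-plane and holomorphically to the open upper half-plane, with the extension bounded, then
every Fourier exponent λ of f (i.e., with nonzero Bohr–Fourier coefficient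
a(λ) = lim_N (2N)^{-1}∫_{−N}^N f(x)e^{−iλx}dx) satisfies λ ≥ 0. -/
theorem spectrum_nonneg_of_bounded_holomorphic_extension
    (f : ℝ → ℂ) (hf : BohrAlmostPeriodic f)
    (F : ℂ → ℂ)
    (hFf : ∀ x : ℝ, F x = f x)
    (hFcont : ContinuousOn F {w : ℂ | 0 ≤ w.im})
    (hFhol : DifferentiableOn ℂ F {w : ℂ | 0 < w.im})
    (hFbdd : ∃ B : ℝ, ∀ w : ℂ, 0 ≤ w.im → ‖F w‖ ≤ B) :
    ∀ (lam : ℝ) (a : ℂ),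
      Tendsto (fun N : ℝ =>
          (2 * N)⁻¹ • ∫ x in (-N)..N, f x * Complex.exp (-Complex.I * lam * x))
        atTop (nhds a) →
      a ≠ 0 → 0 ≤ lam := by
  intro lam a ha hane
  by_contra hlam
  push_neg at hlam
  obtain ⟨B, hB⟩ := hFbdd
  have hB0 : 0 ≤ B := le_trans (norm_nonneg _) (hB 0 le_rfl)
  set g : ℂ → ℂ := fun z => F z * Complex.exp (-Complex.I * lam * z) with hgdef
  have hexp : Continuous fun z : ℂ => Complex.exp (-Complex.I * lam * z) :=
    Complex.continuous_exp.comp (by fun_prop)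
  have hgc : ContinuousOn g {w : ℂ | 0 ≤ w.im} := hFcont.mul hexp.continuousOn
  have hgd : DifferentiableOn ℂ g {w : ℂ | 0 < w.im} :=
    hFhol.mul ((Complex.differentiable_exp.comp (by fun_prop)).differentiableOn)
  -- pointwise bound
  have habs : ∀ (x t : ℝ), 0 ≤ t →
      ‖g (x + t * Complex.I)‖ ≤ B * Real.exp (lam * t) := by
    intro x t ht
    have him : ((x : ℂ) + t * Complex.I).im = t := by simp
    have hre : (-Complex.I * lam * ((x : ℂ) + t * Complex.I)).re = lam * t := by
      simp [Complex.mul_re, Complex.mul_im]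
    rw [hgdef]
    simp only [norm_mul, Complex.norm_exp, hre]
    refine mul_le_mul_of_nonneg_right ?_ (Real.exp_pos _).le
    simpa using hB _ (by rw [him]; exact ht)
  have key : ∀ y : ℝ, 0 < y → ‖a‖ ≤ B * Real.exp (lam * y) := by
    intro y hy
    have hrect : ∀ N : ℝ, 0 < N →
        (∫ x in (-N)..N, g x) = (∫ x in (-N)..N, g (x + y * Complex.I))
          - Complex.I • (∫ t in (0:ℝ)..y, g (N + t * Complex.I))
          + Complex.I • (∫ t in (0:ℝ)..y, g (-N + t * Complex.I)) := by
      intro N hN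
      have hsub1 : (Set.uIcc (-N) N) ×ℂ (Set.uIcc 0 y) ⊆ {w : ℂ | 0 ≤ w.im} := by
        intro z hz
        have := hz.2
        rw [Set.uIcc_of_le hy.le] at this
        exact this.1
      have hsub2 : (Set.Ioo (min (-N) N) (max (-N) N)) ×ℂ (Set.Ioo (min 0 y) (max 0 y)) ⊆
          {w : ℂ | 0 < w.im} := by
        intro z hz
        have := hz.2
        rw [min_eq_left hy.le, max_eq_right hy.le] at this
        exact this.1
      have hcauchy := Complex.integral_boundary_rect_eq_zero_of_continuousOn_of_differentiableOn g
        ((-N : ℝ) : ℂ) (((N : ℝ) : ℂ) + y * Complex.I)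
        (by
          refine hgc.mono ?_
          simpa using hsub1)
        (by
          refine hgd.mono ?_
          simpa using hsub2)
      simp only [Complex.add_re, Complex.ofReal_re, Complex.add_im, Complex.ofReal_im,
        Complex.mul_I_re, Complex.mul_I_im, Complex.ofReal_neg, Complex.neg_re, Complex.neg_im,
        Complex.I_re, Complex.I_im, Complex.mul_re, Complex.mul_im, mul_zero, mul_one,
        zero_add, add_zero, zero_mul, sub_zero, zero_sub, neg_zero, Complex.ofReal_zero] at hcauchy
      linear_combination hcauchy
    -- integrability-free norm bounds
    have hside : ∀ N : ℝ, ‖∫ t in (0:ℝ)..y, g (N + t * Complex.I)‖ ≤ B * y := by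
      intro N
      have := intervalIntegral.norm_integral_le_of_norm_le_const
        (C := B) (f := fun t : ℝ => g (N + t * Complex.I)) (a := 0) (b := y) ?_
      · calc ‖∫ t in (0:ℝ)..y, g (N + t * Complex.I)‖ ≤ B * |y - 0| := this
          _ = B * y := by rw [sub_zero, abs_of_pos hy]
      · intro t ht
        rw [Set.uIoc_of_le hy.le] at ht
        calc ‖g (N + t * Complex.I)‖ ≤ B * Real.exp (lam * t) := habs N t ht.1.le
          _ ≤ B * 1 := by
              refine mul_le_mul_of_nonneg_left ?_ hB0
              rw [show (1:ℝ) = Real.exp 0 by simp]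
              exact Real.exp_le_exp.2 (by nlinarith [ht.1.le])
          _ = B := mul_one B
    have htop : ∀ N : ℝ, 0 < N →
        ‖∫ x in (-N)..N, g (x + y * Complex.I)‖ ≤ B * Real.exp (lam * y) * (2 * N) := by
      intro N hN
      have := intervalIntegral.norm_integral_le_of_norm_le_const
        (C := B * Real.exp (lam * y)) (f := fun x : ℝ => g (x + y * Complex.I))
        (a := -N) (b := N) (fun x _ => habs x y hy.le)
      calc ‖∫ x in (-N)..N, g (x + y * Complex.I)‖ ≤ B * Real.exp (lam * y) * |N - (-N)| := this
        _ = B * Real.exp (lam * y) * (2 * N) := by rw [abs_of_pos (by linarith)]; ring_nf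
    have hnorm : ∀ᶠ N in (atTop : Filter ℝ),
        ‖(2 * N)⁻¹ • ∫ x in (-N)..N, f x * Complex.exp (-Complex.I * lam * x)‖
          ≤ B * Real.exp (lam * y) + (2 * N)⁻¹ * (2 * B * y) := by
      filter_upwards [eventually_gt_atTop (0:ℝ)] with N hN
      have hfg : (∫ x in (-N)..N, f x * Complex.exp (-Complex.I * lam * x))
          = ∫ x in (-N)..N, g x := by
        refine intervalIntegral.integral_congr fun x _ => ?_
        rw [hgdef]; simp [hFf x]
      rw [hfg, norm_smul, hrect N hN]
      have hbnd : ‖(∫ x in (-N)..N, g (x + y * Complex.I))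
          - Complex.I • (∫ t in (0:ℝ)..y, g (N + t * Complex.I))
          + Complex.I • (∫ t in (0:ℝ)..y, g (-N + t * Complex.I))‖
          ≤ B * Real.exp (lam * y) * (2 * N) + B * y + B * y := by
        calc _ ≤ ‖(∫ x in (-N)..N, g (x + y * Complex.I))
              - Complex.I • (∫ t in (0:ℝ)..y, g (N + t * Complex.I))‖
              + ‖Complex.I • (∫ t in (0:ℝ)..y, g (-N + t * Complex.I))‖ := norm_add_le _ _
          _ ≤ ‖∫ x in (-N)..N, g (x + y * Complex.I)‖
              + ‖Complex.I • (∫ t in (0:ℝ)..y, g (N + t * Complex.I))‖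
              + ‖Complex.I • (∫ t in (0:ℝ)..y, g (-N + t * Complex.I))‖ := by
                gcongr; exact norm_sub_le _ _
          _ ≤ B * Real.exp (lam * y) * (2 * N) + B * y + B * y := by
              rw [norm_smul, norm_smul]
              simp only [Complex.norm_I, one_mul]
              gcongr
              · exact htop N hN
              · exact hside N
              · have := hside (-N)
                rw [Complex.ofReal_neg] at this
                exact this
      have h2N : ‖(2 * N)⁻¹‖ = (2 * N)⁻¹ := by
        rw [Real.norm_eq_abs, abs_of_pos (by positivity)]
      rw [h2N]
      calc (2 * N)⁻¹ * ‖_‖ ≤ (2 * N)⁻¹ * (B * Real.exp (lam * y) * (2 * N) + B * y + B * y) := by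
            gcongr
        _ = B * Real.exp (lam * y) + (2 * N)⁻¹ * (2 * B * y) := by
            field_simp
            ring
    have h1 : Tendsto (fun N : ℝ =>
        ‖(2 * N)⁻¹ • ∫ x in (-N)..N, f x * Complex.exp (-Complex.I * lam * x)‖)
        atTop (nhds ‖a‖) := ha.norm
    have h2 : Tendsto (fun N : ℝ => B * Real.exp (lam * y) + (2 * N)⁻¹ * (2 * B * y))
        atTop (nhds (B * Real.exp (lam * y))) := by
      have hz : Tendsto (fun N : ℝ => (2 * N)⁻¹ * (2 * B * y)) atTop (nhds 0) := by
        have : Tendsto (fun N : ℝ => (2 * N)⁻¹) atTop (nhds 0) :=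
          (tendsto_const_mul_atTop_of_pos (by norm_num : (0:ℝ) < 2)).2 tendsto_id
            |>.inv_tendsto_atTop
        simpa using this.mul_const (2 * B * y)
      simpa using tendsto_const_nhds.add hz
    exact le_of_tendsto_of_tendsto h1 h2 hnorm
  -- let y → ∞
  have hlim : Tendsto (fun y : ℝ => B * Real.exp (lam * y)) atTop (nhds 0) := by
    have h1 : Tendsto (fun y : ℝ => lam * y) atTop atBot :=
      (tendsto_const_mul_atBot_of_neg hlam).2 tendsto_id
    have h2 : Tendsto (fun y : ℝ => Real.exp (lam * y)) atTop (nhds 0) :=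
      Real.tendsto_exp_atBot.comp h1
    simpa using h2.const_mul B
  have : ‖a‖ ≤ 0 :=
    ge_of_tendsto hlim ((eventually_gt_atTop (0:ℝ)).mono fun y hy => key y hy)
  exact hane (norm_le_zero_iff.1 this)
end
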